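/- arXiv:1608.00155 — 2 statements merged into one kernel-verified Lean document; each statement's English description precedes it below -/
import Mathlib

section
/- Let $T_k$ be the number of i.i.d. draws from $p=(p_1,\ldots,p_N)$ until $k$ distinct elements are seen, with all $p_i > 0$ (or at least $k$ positive). Then $E(T_k) = \sum_{A \subseteq H, |A| \le k-1} (-1)^{k-1-|A|} \binom{N-|A|-1}{k-1-|A|} \frac{1}{1 - p_A}$, where $p_A = \sum_{i\in A} p_i$ and the sum ranges over $A$ with $p_A < 1$. -/
/-- The probability of an event `E` for `n` i.i.d. draws from the distribution `p`
on `{1, …, N}`: the sum of the product weights of the outcome sequences in `E`. -/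
noncomputable def prob {N : ℕ} (p : Fin N → ℝ) {n : ℕ} (E : Set (Fin n → Fin N)) : ℝ :=
  ∑ ω : Fin n → Fin N, Set.indicator E (fun ω => ∏ i, p (ω i)) ω

/-- The number of distinct values drawn, `Y_n`. -/
noncomputable def distinctCount {N n : ℕ} (ω : Fin n → Fin N) : ℕ :=
  (Finset.univ.image ω).card

/-- The number of distinct values among the first `m` draws, `Y_m`. -/
noncomputable def prefCount {N n : ℕ} (ω : Fin n → Fin N) (m : ℕ) : ℕ :=
  ((Finset.univ.filter (fun i : Fin n => (i : ℕ) < m)).image ω).card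

/-!
`T_k > n` means that the first `n` draws show fewer than `k` distinct values, because the number
of distinct values among the first `m` draws grows from `0` in steps of at most one. For a set
`S` of values with `|S| < k ≤ N`, the coefficients `c_A = (-1)^(k-1-|A|) C(N-|A|-1, k-1-|A|)`
sum to `1` over the sets `S ⊆ A` with `|A| ≤ k - 1` (and trivially to `0` when `|S| ≥ k`).
Summing over the draws, `P(T_k > n) = ∑_{|A| ≤ k-1} c_A p_A^n`, and summing these geometric
series over `n` gives the formula.
-/

open Finset

theorem Nat.exists_le_eq_of_le_of_succ_le {f : ℕ → ℕ} (hf : ∀ m, f (m + 1) ≤ f m + 1)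
    {k n : ℕ} (h0 : f 0 ≤ k) (hn : k ≤ f n) : ∃ m ≤ n, f m = k := by
  induction n with
  | zero => exact ⟨0, le_rfl, by omega⟩
  | succ n ih =>
    by_cases hk : k ≤ f n
    · obtain ⟨m, hm, rfl⟩ := ih hk
      exact ⟨m, by omega, rfl⟩
    · exact ⟨n + 1, le_rfl, by have := hf n; omega⟩

section DistinctValues

variable {N n : ℕ} (ω : Fin n → Fin N)

theorem prefCount_zero : prefCount ω 0 = 0 := by
  simp [prefCount]

theorem prefCount_self : prefCount ω n = distinctCount ω := by
  simp [prefCount, distinctCount]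

theorem prefCount_le_distinctCount (m : ℕ) : prefCount ω m ≤ distinctCount ω :=
  card_le_card (image_subset_image (subset_univ _))

theorem prefCount_succ_le (m : ℕ) : prefCount ω (m + 1) ≤ prefCount ω m + 1 := by
  have hsplit : univ.filter (fun i : Fin n => (i : ℕ) < m + 1)
      = univ.filter (fun i : Fin n => i < m) ∪ univ.filter (fun i : Fin n => i = m) := by
    ext i
    simp only [mem_filter, mem_union, mem_univ, true_and]
    omega
  have hlast : #((univ.filter fun i : Fin n => (i : ℕ) = m).image ω) ≤ 1 :=
    card_image_le.trans <| card_le_one.2 fun a ha b hb => by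
      simp only [mem_filter, mem_univ, true_and] at ha hb
      exact Fin.ext (ha.trans hb.symm)
  unfold prefCount
  rw [hsplit, image_union]
  exact (card_union_le _ _).trans (by omega)

theorem forall_prefCount_ne_iff {k : ℕ} :
    (∀ m ≤ n, prefCount ω m ≠ k) ↔ distinctCount ω < k := by
  refine ⟨fun h => ?_, fun h m _ hm => by have := prefCount_le_distinctCount ω m; omega⟩
  by_contra! hk
  obtain ⟨m, hmn, hm⟩ := Nat.exists_le_eq_of_le_of_succ_le (prefCount_succ_le ω)
    ((prefCount_zero ω).trans_le k.zero_le) (prefCount_self ω ▸ hk)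
  exact h m hmn hm

end DistinctValues

theorem Finset.sum_Icc_apply_card {α M : Type*} [DecidableEq α] [AddCommMonoid M]
    {s t : Finset α} (h : s ⊆ t) (f : ℕ → M) :
    ∑ u ∈ Icc s t, f #u
      = ∑ j ∈ range (#(t \ s) + 1), (#(t \ s)).choose j • f (#s + j) := by
  have hdisj : ∀ u ∈ (t \ s).powerset, Disjoint s u := fun u hu =>
    disjoint_sdiff.mono_right (mem_powerset.1 hu)
  rw [Icc_eq_image_powerset h, sum_image fun u hu v hv huv => by
      rw [← union_sdiff_cancel_left (hdisj u hu), ← union_sdiff_cancel_left (hdisj v hv)]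
      exact congrArg (· \ s) huv,
    sum_congr rfl fun u hu => by rw [card_union_of_disjoint (hdisj u hu)]]
  exact sum_powerset_apply_card (fun j => f (#s + j))

theorem sum_range_choose_mul_neg_one_pow_mul_choose (M l : ℕ) :
    ∑ j ∈ range (l + 1), (M.choose j : ℤ) * ((-1) ^ (l - j) * (M - j).choose (l - j))
      = M.choose l * 0 ^ l := by
  have hterm : ∀ j ∈ range (l + 1),
      (M.choose j : ℤ) * ((-1) ^ (l - j) * (M - j).choose (l - j))
        = M.choose l * (1 ^ j * (-1) ^ (l - j) * l.choose j) := fun j hj => by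
    have := congrArg (Nat.cast : ℕ → ℤ) (Nat.choose_mul (n := M) (mem_range_succ_iff.1 hj))
    push_cast at this
    linear_combination (-1 : ℤ) ^ (l - j) * this.symm
  rw [sum_congr rfl hterm, ← mul_sum, ← add_pow]
  norm_num

/- Expanding `(-1)^(r-j) C(M-j-1, r-j)` as the partial alternating sum of `C(M-j, ·)` turns the
sum into a triangle whose `l`-th diagonal is `C(M, l) (1 - 1)^l`. -/
theorem sum_range_choose_mul_neg_one_pow_mul_choose_pred {M r : ℕ} (hr : r < M) :
    ∑ j ∈ range (r + 1), (M.choose j : ℤ) * ((-1) ^ (r - j) * (M - j - 1).choose (r - j))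
      = 1 := by
  have hpartial : ∀ j ∈ range (r + 1), (-1 : ℤ) ^ (r - j) * (M - j - 1).choose (r - j)
      = ∑ i ∈ range (r + 1 - j), (-1 : ℤ) ^ i * (M - j).choose i := fun j hj => by
    have hj := mem_range.1 hj
    have := Int.alternating_sum_range_choose_eq_choose (n := M - j - 1) (m := r - j)
    rwa [Nat.sub_add_cancel (by omega : 1 ≤ M - j), ← Nat.sub_add_comm (by omega), eq_comm]
      at this
  calc ∑ j ∈ range (r + 1), (M.choose j : ℤ) * ((-1) ^ (r - j) * (M - j - 1).choose (r - j))
      = ∑ j ∈ range (r + 1), ∑ i ∈ range (r + 1 - j),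
          (M.choose j : ℤ) * ((-1) ^ i * (M - j).choose i) :=
        sum_congr rfl fun j hj => by rw [hpartial j hj, mul_sum]
    _ = ∑ l ∈ range (r + 1), ∑ j ∈ range (l + 1),
          (M.choose j : ℤ) * ((-1) ^ (l - j) * (M - j).choose (l - j)) :=
        (sum_range_diag_flip (r + 1) fun j i =>
          (M.choose j : ℤ) * ((-1) ^ i * (M - j).choose i)).symm
    _ = ∑ l ∈ range (r + 1), (M.choose l : ℤ) * 0 ^ l :=
        sum_congr rfl fun l _ => sum_range_choose_mul_neg_one_pow_mul_choose M l
    _ = 1 := by simp [sum_range_succ']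

theorem sum_Icc_univ_neg_one_pow_mul_choose {α : Type*} [Fintype α] [DecidableEq α] {K : ℕ}
    (hK : K < Fintype.card α) (S : Finset α) :
    ∑ A ∈ Icc S univ with #A ≤ K,
        (-1 : ℤ) ^ (K - #A) * (Fintype.card α - #A - 1).choose (K - #A)
      = if #S ≤ K then 1 else 0 := by
  set N := Fintype.card α
  split_ifs with hS
  · have hcompl : #(univ \ S) = N - #S := by
      rw [← compl_eq_univ_sdiff, card_compl]
    rw [sum_filter]
    refine (sum_Icc_apply_card (subset_univ S) fun a => if a ≤ K then
      (-1 : ℤ) ^ (K - a) * (N - a - 1).choose (K - a) else 0).trans ?_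
    rw [hcompl]
    set M := N - #S
    set r := K - #S
    rw [← sum_subset (range_subset_range.2 (by omega : r + 1 ≤ M + 1)) fun j _ hj => by
      rw [if_neg (by simp only [mem_range] at hj; omega), smul_zero]]
    refine (sum_congr rfl fun j hj => ?_).trans
      (sum_range_choose_mul_neg_one_pow_mul_choose_pred (by omega : r < M))
    have hj := mem_range.1 hj
    rw [if_pos (by omega), nsmul_eq_mul, show K - (#S + j) = r - j by omega,
      show N - (#S + j) - 1 = M - j - 1 by omega]
  · refine sum_eq_zero fun A hA => absurd ?_ hS
    obtain ⟨hSA, hAK⟩ := mem_filter.1 hA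
    exact (card_le_card (mem_Icc.1 hSA).1).trans hAK

theorem sum_pi_sum_filter_image_subset_mul_prod {α R : Type*} [Fintype α] [DecidableEq α]
    [CommSemiring R] (p : α → R) (n : ℕ) (s : Finset (Finset α)) (g : Finset α → R) :
    ∑ ω : Fin n → α, (∑ A ∈ s with univ.image ω ⊆ A, g A) * ∏ i, p (ω i)
      = ∑ A ∈ s, g A * (∑ i ∈ A, p i) ^ n := by
  simp_rw [sum_filter, sum_mul]
  rw [sum_comm]
  refine sum_congr rfl fun A _ => ?_
  have hpi :
      univ.filter (fun ω : Fin n → α => univ.image ω ⊆ A) = Fintype.piFinset fun _ => A := by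
    ext ω
    simp [image_subset_iff, Fintype.mem_piFinset]
  simp_rw [ite_mul, zero_mul]
  rw [← sum_filter, hpi, sum_pow', mul_sum]

theorem prob_distinctCount_lt {N : ℕ} (p : Fin N → ℝ) (n : ℕ) {k : ℕ} (hk1 : 1 ≤ k)
    (hkN : k ≤ N) :
    prob p {ω : Fin n → Fin N | distinctCount ω < k}
      = ∑ A ∈ univ.powerset with #A ≤ k - 1,
          (-1 : ℝ) ^ (k - 1 - #A) * (N - #A - 1).choose (k - 1 - #A)
            * (∑ i ∈ A, p i) ^ n := by
  rw [prob, ← sum_pi_sum_filter_image_subset_mul_prod]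
  refine sum_congr rfl fun ω _ => ?_
  have hcoeff := sum_Icc_univ_neg_one_pow_mul_choose (K := k - 1) (by simp; omega) (univ.image ω)
  have hsets : {A ∈ {A ∈ (univ : Finset (Fin N)).powerset | #A ≤ k - 1} | univ.image ω ⊆ A}
      = {A ∈ Icc (univ.image ω) univ | #A ≤ k - 1} := by
    ext A
    simp [and_comm]
  rw [hsets]
  replace hcoeff := congrArg (Int.cast : ℤ → ℝ) hcoeff
  push_cast [Fintype.card_fin] at hcoeff
  rw [hcoeff, ite_mul, one_mul, zero_mul, Set.indicator_apply]
  exact if_congr (show distinctCount ω < k ↔ _ by rw [distinctCount]; omega) rfl rfl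

theorem sum_lt_one_of_card_lt {α : Type*} [Fintype α] {p : α → ℝ} (hp : ∀ i, 0 < p i)
    (hsum : ∑ i, p i = 1) {A : Finset α} (hA : #A < Fintype.card α) : ∑ i ∈ A, p i < 1 := by
  obtain ⟨i, -, hi⟩ :=
    exists_mem_notMem_of_card_lt_card (s := A) (t := univ) (by rwa [card_univ])
  exact hsum ▸ sum_lt_sum_of_subset (subset_univ A) (mem_univ i) hi (hp i)
    fun j _ _ => (hp j).le

/-- `E(T_k) = ∑_{n ≥ 0} P(T_k > n)
 = ∑_{A ⊆ H, |A| ≤ k-1, p_A < 1} (-1)^{k-1-|A|} C(N-|A|-1, k-1-|A|) / (1 - p_A)`. -/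
theorem stmt_13 (N k : ℕ) (p : Fin N → ℝ) (hp : ∀ i, 0 < p i) (hsum : ∑ i, p i = 1)
    (hk1 : 1 ≤ k) (hkN : k ≤ N) :
    ∑' n : ℕ, prob p {ω : Fin n → Fin N | ∀ m ≤ n, prefCount ω m ≠ k}
      = ∑ A ∈ Finset.univ.powerset.filter
          (fun A : Finset (Fin N) => A.card ≤ k - 1 ∧ ∑ i ∈ A, p i < 1),
          (-1 : ℝ) ^ (k - 1 - A.card) * (Nat.choose (N - A.card - 1) (k - 1 - A.card)) *
            (1 / (1 - ∑ i ∈ A, p i)) := by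
  have hpA_nonneg (A : Finset (Fin N)) : 0 ≤ ∑ i ∈ A, p i := sum_nonneg fun i _ => (hp i).le
  have hpA_lt_one (A : Finset (Fin N)) (hA : #A ≤ k - 1) : ∑ i ∈ A, p i < 1 :=
    sum_lt_one_of_card_lt hp hsum (by rw [Fintype.card_fin]; omega)
  have hevent (n : ℕ) : {ω : Fin n → Fin N | ∀ m ≤ n, prefCount ω m ≠ k}
      = {ω | distinctCount ω < k} := Set.ext fun ω => forall_prefCount_ne_iff ω
  rw [filter_congr fun A _ => and_iff_left_of_imp (hpA_lt_one A),
    tsum_congr fun n => (hevent n ▸ prob_distinctCount_lt p n hk1 hkN),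
    Summable.tsum_finsetSum fun A hA =>
      (summable_geometric_of_lt_one (hpA_nonneg A) (hpA_lt_one A (mem_filter.1 hA).2)).mul_left _]
  refine sum_congr rfl fun A hA => ?_
  rw [tsum_mul_left, tsum_geometric_of_lt_one (hpA_nonneg A) (hpA_lt_one A (mem_filter.1 hA).2),
    one_div]
end

section
/- Let $p$ and $q$ be probability distributions on $H = \{1,\ldots,N\}$ with $p \prec q$ (majorization). Then for every $n \ge 1$ and every $k \ge 1$, $P_p(Y_n \le k) \le P_q(Y_n \le k)$; i.e., the map $p \mapsto P_p(Y_n \le k)$ is Schur-convex. -/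
/-- `p` is majorized by `q` (for vectors with equal total sums): every partial sum of `p`
over a subset is dominated by a sum of `q` over a subset of the same cardinality, i.e.
the sum of the `k` largest entries of `p` is at most that of `q`, for every `k`. -/
def Majorizes {N : ℕ} (q p : Fin N → ℝ) : Prop :=
  ∀ A : Finset (Fin N), ∃ B : Finset (Fin N), B.card = A.card ∧ ∑ i ∈ A, p i ≤ ∑ i ∈ B, q i

/-!
Moving mass from a more likely value `a` to a less likely value `b`, without reversing their
order, can only decrease `P(Y_n ≤ k)`. Group the outcome sequences by the sequence obtained by
relabelling every `b` as `a`. In a group where `a` occurs `m ≥ 1` times and `c` other values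
occur, the weight outside these `m` positions is a fixed `W`, and the group contributes
`W ((x + y) ^ m [c + 2 ≤ k] + (x ^ m + y ^ m) [c + 1 = k])`, where `x, y` are the weights of
`a, b`. The transfer keeps `x + y` and, by convexity, lowers `x ^ m + y ^ m`.

If `p ≺ q`, sort both decreasingly. Let `l` be the first index with `q l < p l` and `j < l` the
last index before it with `p j < q j`. Transferring `min (q j - p j) (p l - q l)` from `j` to `l`
keeps the prefix sums of `q` above those of `p` and makes one more coordinate agree with `p`,
so `p` is reached from `q` by finitely many such transfers (Hardy–Littlewood–Pólya).
-/

open Finset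

theorem pow_add_pow_le_pow_add_pow {R : Type*} [CommRing R] [LinearOrder R]
    [IsStrictOrderedRing R] {x y x' y' : R} (m : ℕ) (hy' : 0 ≤ y') (hyy : y' ≤ y) (hyx : y ≤ x)
    (hxx : x ≤ x') (hs : x + y = x' + y') : x ^ m + y ^ m ≤ x' ^ m + y' ^ m := by
  suffices y ^ m - y' ^ m ≤ x' ^ m - x ^ m by linarith
  -- both differences are `y - y'` times a geometric sum, termwise larger on the right
  rw [← geom_sum₂_mul, ← geom_sum₂_mul, show x' - x = y - y' by linarith]
  gcongr with i
  all_goals first | exact pow_nonneg (by linarith) i | linarith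

theorem Antitone.sum_le_sum_Iic {α : Type*} [LinearOrder α] [LocallyFiniteOrderBot α]
    {g : α → ℝ} (hg : Antitone g) {s : Finset α} {t : α} (hs : #s = #(Iic t)) :
    ∑ i ∈ s, g i ≤ ∑ i ∈ Iic t, g i := by
  rw [← sub_nonneg, ← sum_sdiff_sub_sum_sdiff, sub_nonneg]
  calc ∑ i ∈ s \ Iic t, g i ≤ #(s \ Iic t) • g t :=
        sum_le_card_nsmul _ _ _ fun i hi => hg (not_le.1 (mem_Iic.not.1 (mem_sdiff.1 hi).2)).le
    _ = #(Iic t \ s) • g t := by rw [card_sdiff_comm hs]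
    _ ≤ ∑ i ∈ Iic t \ s, g i :=
        card_nsmul_le_sum _ _ _ fun i hi => hg (mem_Iic.1 (mem_sdiff.1 hi).1)

theorem card_eq_card_erase_erase_add {α : Type*} [DecidableEq α] {a b : α} (hab : a ≠ b)
    (s : Finset α) :
    #s = #((s.erase a).erase b) + (if a ∈ s then 1 else 0) + if b ∈ s then 1 else 0 := by
  have key : ∀ (c : α) (t : Finset α), #t = #(t.erase c) + if c ∈ t then 1 else 0 := by
    intro c t
    split_ifs with h
    · exact (card_erase_add_one h).symm
    · rw [erase_eq_of_notMem h, add_zero]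
  rw [key a s, key b (s.erase a)]
  simp only [mem_erase, ne_eq, hab.symm, not_false_eq_true, true_and]
  ring

section Transfer

variable {N : ℕ}

def transfer (q : Fin N → ℝ) (j l : Fin N) (ε : ℝ) : Fin N → ℝ :=
  q - Pi.single j ε + Pi.single l ε

def TransferAntitone (F : (Fin N → ℝ) → ℝ) : Prop :=
  ∀ q : Fin N → ℝ, (∀ i, 0 ≤ q i) → ∀ (j l : Fin N) (ε : ℝ), j ≠ l → 0 ≤ ε → q l + ε ≤ q j - ε →
    F (transfer q j l ε) ≤ F q

variable {q : Fin N → ℝ} {j l : Fin N} {ε : ℝ}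

theorem transfer_apply (i : Fin N) :
    transfer q j l ε i = q i - (if i = j then ε else 0) + if i = l then ε else 0 := by
  simp [transfer, Pi.single_apply]

theorem sum_transfer (s : Finset (Fin N)) :
    ∑ i ∈ s, transfer q j l ε i =
      ∑ i ∈ s, q i - (if j ∈ s then ε else 0) + if l ∈ s then ε else 0 := by
  simp only [transfer, Pi.add_apply, Pi.sub_apply, sum_add_distrib, sum_sub_distrib,
    sum_pi_single']

theorem transfer_nonneg (hq : ∀ i, 0 ≤ q i) (hjl : j ≠ l) (hε : 0 ≤ ε)
    (h : q l + ε ≤ q j - ε) (i : Fin N) : 0 ≤ transfer q j l ε i := by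
  rw [transfer_apply]
  have := hq i
  have := hq l
  split_ifs with hij hil hil
  · exact absurd (hij.symm.trans hil) hjl
  · subst hij; linarith
  · subst hil; linarith
  · linarith

end Transfer

section Majorization

variable {N : ℕ} {F : (Fin N → ℝ) → ℝ} {p q : Fin N → ℝ} {j l : Fin N} {ε : ℝ}

theorem Majorizes.sum_Iic_comp_le (hmaj : Majorizes q p) (σ τ : Equiv.Perm (Fin N))
    (hq : Antitone (q ∘ τ)) (t : Fin N) : ∑ i ∈ Iic t, p (σ i) ≤ ∑ i ∈ Iic t, q (τ i) := by
  obtain ⟨B, hB, hle⟩ := hmaj ((Iic t).map σ.toEmbedding)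
  calc ∑ i ∈ Iic t, p (σ i) = ∑ i ∈ (Iic t).map σ.toEmbedding, p i := by
        rw [sum_map]; rfl
    _ ≤ ∑ i ∈ B, q i := hle
    _ = ∑ i ∈ B.map τ.symm.toEmbedding, q (τ i) := by simp [sum_map]
    _ ≤ ∑ i ∈ Iic t, q (τ i) := hq.sum_le_sum_Iic (by simp [hB])

theorem exists_transfer_indices (hsum : ∑ i, p i = ∑ i, q i)
    (hpre : ∀ t, ∑ i ∈ Iic t, p i ≤ ∑ i ∈ Iic t, q i) (hpq : p ≠ q) :
    ∃ j l, j < l ∧ p j < q j ∧ q l < p l ∧ ∀ i, j < i → i < l → p i = q i := by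
  obtain ⟨l, hl, hlmin⟩ : ∃ l, q l < p l ∧ ∀ i < l, p i ≤ q i := by
    have hex : {i | q i < p i}.Nonempty := by
      by_contra! h
      have hle : ∀ i ∈ univ, p i ≤ q i := fun i _ => not_lt.1 fun hi => h.subset hi
      exact hpq (funext fun i => (sum_eq_sum_iff_of_le hle).1 hsum i (mem_univ i))
    obtain ⟨l, hl, hmin⟩ := wellFounded_lt.has_min _ hex
    exact ⟨l, hl, fun i hi => not_lt.1 fun h => hmin i h hi⟩
  obtain ⟨j, ⟨hjl, hj⟩, hjmax⟩ :
      ∃ j, (j < l ∧ p j < q j) ∧ ∀ i, j < i → i < l → q i ≤ p i := by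
    have hex : {i | i < l ∧ p i < q i}.Nonempty := by
      have hlt : ∑ i ∈ Iio l, p i < ∑ i ∈ Iio l, q i := by
        have := hpre l
        rw [← Iio_insert, sum_insert notMem_Iio_self, sum_insert notMem_Iio_self] at this
        linarith
      obtain ⟨i, hi, hpi⟩ := exists_lt_of_sum_lt hlt
      exact ⟨i, mem_Iio.1 hi, hpi⟩
    obtain ⟨j, hj, hmax⟩ := wellFounded_gt.has_min _ hex
    exact ⟨j, hj, fun i hji hil => not_lt.1 fun h => hmax i ⟨hil, h⟩ hji⟩
  exact ⟨j, l, hjl, hj, hl, fun i hji hil => le_antisymm (hlmin i hil) (hjmax i hji hil)⟩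

theorem sum_Iic_le_sum_Iic_transfer (hpre : ∀ t, ∑ i ∈ Iic t, p i ≤ ∑ i ∈ Iic t, q i)
    (hjl : j < l) (hmid : ∀ i, j < i → i < l → p i = q i) (hε : ε ≤ p l - q l) (t : Fin N) :
    ∑ i ∈ Iic t, p i ≤ ∑ i ∈ Iic t, transfer q j l ε i := by
  rw [sum_transfer]
  simp only [mem_Iic]
  by_cases hlt : l ≤ t
  · rw [if_pos (hjl.le.trans hlt), if_pos hlt]
    linarith [hpre t]
  by_cases hjt : j ≤ t
  · rw [if_pos hjt, if_neg hlt]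
    -- `p` and `q` agree strictly between `j` and `l`, so the gap `∑ (q - p)` up to `t` is the
    -- gap before `l`, which is at least `p l - q l`.
    have hgap : ∑ i ∈ Iic t, (q i - p i) = ∑ i ∈ Iio l, (q i - p i) := by
      refine sum_subset (fun i hi => mem_Iio.2 ((mem_Iic.1 hi).trans_lt (not_le.1 hlt))) ?_
      intro i hil hit
      rw [hmid i (hjt.trans_lt (not_le.1 (mem_Iic.not.1 hit))) (mem_Iio.1 hil), sub_self]
    have := hpre l
    rw [← Iio_insert, sum_insert notMem_Iio_self, sum_insert notMem_Iio_self] at this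
    rw [sum_sub_distrib, sum_sub_distrib] at hgap
    linarith
  · rw [if_neg hjt, if_neg hlt]
    linarith [hpre t]

theorem card_ne_transfer_min_lt (hjl : j ≠ l) (hj : p j < q j) (hl : q l < p l) :
    #{i | p i ≠ transfer q j l (min (q j - p j) (p l - q l)) i} < #{i | p i ≠ q i} := by
  set ε := min (q j - p j) (p l - q l)
  have hj' : transfer q j l ε j = q j - ε := by simp [transfer_apply, hjl]
  have hl' : transfer q j l ε l = q l + ε := by simp [transfer_apply, hjl.symm]
  apply card_lt_card
  rw [ssubset_iff_of_subset]
  · rcases min_choice (q j - p j) (p l - q l) with h | h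
    · refine ⟨j, by simpa using hj.ne, ?_⟩
      have hε : ε = q j - p j := h
      simp only [mem_filter_univ, hj', not_not]
      linarith
    · refine ⟨l, by simpa using hl.ne', ?_⟩
      have hε : ε = p l - q l := h
      simp only [mem_filter_univ, hl', not_not]
      linarith
  · intro i hi
    simp only [mem_filter_univ] at hi ⊢
    by_cases hij : i = j
    · exact hij ▸ hj.ne
    by_cases hil : i = l
    · exact hil ▸ hl.ne'
    simpa [transfer_apply, hij, hil] using hi

theorem TransferAntitone.le_of_sum_Iic_le (hF : TransferAntitone F) (hpa : Antitone p)
    (hq : ∀ i, 0 ≤ q i) (hsum : ∑ i, p i = ∑ i, q i)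
    (hpre : ∀ t, ∑ i ∈ Iic t, p i ≤ ∑ i ∈ Iic t, q i) : F p ≤ F q := by
  induction hd : #{i | p i ≠ q i} using Nat.strong_induction_on generalizing q with
  | _ d ih =>
  by_cases hpq : p = q
  · rw [hpq]
  obtain ⟨j, l, hjl, hj, hl, hmid⟩ := exists_transfer_indices hsum hpre hpq
  set ε := min (q j - p j) (p l - q l)
  have hεj : ε ≤ q j - p j := min_le_left _ _
  have hεl : ε ≤ p l - q l := min_le_right _ _
  have hε : 0 ≤ ε := le_min (by linarith) (by linarith)
  have horder : q l + ε ≤ q j - ε := by linarith [hpa hjl.le]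
  calc F p ≤ F (transfer q j l ε) :=
        ih _ (hd ▸ card_ne_transfer_min_lt hjl.ne hj hl) (transfer_nonneg hq hjl.ne hε horder)
          (by rw [hsum, sum_transfer]; simp) (sum_Iic_le_sum_Iic_transfer hpre hjl hmid hεl) rfl
    _ ≤ F q := hF q hq j l ε hjl.ne hε horder

theorem TransferAntitone.le_of_majorizes (hF : TransferAntitone F)
    (hperm : ∀ (r : Fin N → ℝ) (σ : Equiv.Perm (Fin N)), F (r ∘ σ) = F r)
    (hq : ∀ i, 0 ≤ q i) (hsum : ∑ i, p i = ∑ i, q i) (hmaj : Majorizes q p) : F p ≤ F q := by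
  set σ := Tuple.sort (OrderDual.toDual ∘ p)
  set τ := Tuple.sort (OrderDual.toDual ∘ q)
  have hσ : Antitone (p ∘ σ) := monotone_toDual_comp_iff.1 (Tuple.monotone_sort _)
  have hτ : Antitone (q ∘ τ) := monotone_toDual_comp_iff.1 (Tuple.monotone_sort _)
  rw [← hperm p σ, ← hperm q τ]
  refine hF.le_of_sum_Iic_le hσ (fun i => hq _) ?_ (hmaj.sum_Iic_comp_le σ τ hτ)
  simpa [Equiv.sum_comp] using hsum

end Majorization

section FiberWeight

variable {ι : Type*} [DecidableEq ι]

/-- The weight `x ^ #(S \ T) * y ^ #T` of drawing `b` at the positions `T ⊆ S` and `a` at the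
others, counted when the `c` other values, `a` (present iff `T ≠ S`) and `b` (present iff
`T ≠ ∅`) number at most `k`. -/
noncomputable def fiberWeight (S : Finset ι) (c k : ℕ) (x y : ℝ) : ℝ :=
  ∑ T ∈ S.powerset, if c + (if T = S then 0 else 1) + (if T = ∅ then 0 else 1) ≤ k then
    x ^ #(S \ T) * y ^ #T else 0

theorem fiberWeight_eq {S : Finset ι} (hS : S.Nonempty) (c k : ℕ) (x y : ℝ) :
    fiberWeight S c k x y =
      (if c + 2 ≤ k then (x + y) ^ #S else 0) + if c + 1 = k then x ^ #S + y ^ #S else 0 := by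
  have hne : (∅ : Finset ι) ≠ S := hS.ne_empty.symm
  have hind : ∀ T, (c + (if T = S then 0 else 1) + (if T = ∅ then 0 else 1) ≤ k) ↔
      c + 2 ≤ k ∨ (c + 1 = k ∧ (T = ∅ ∨ T = S)) := by
    intro T
    by_cases h1 : T = S <;> by_cases h2 : T = ∅ <;> simp only [h1, h2] <;> grind
  simp only [fiberWeight, hind]
  by_cases h2 : c + 2 ≤ k
  · rw [if_pos h2, if_neg (by omega), add_zero, add_comm x, ← sum_pow_mul_eq_add_pow]
    refine sum_congr rfl fun T hT => ?_
    rw [if_pos (Or.inl h2), card_sdiff_of_subset (mem_powerset.1 hT), mul_comm]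
  by_cases h1 : c + 1 = k
  · have hext : S.powerset.filter (fun T => T = ∅ ∨ T = S) = {∅, S} := by
      ext T; simp only [mem_filter, mem_powerset, mem_insert, mem_singleton]
      constructor
      · exact fun h => h.2
      · rintro (rfl | rfl) <;> simp
    simp only [h1, h2, true_and, false_or, if_true, if_false, zero_add]
    rw [← sum_filter, hext, sum_pair hne]
    simp
  · simp [h1, h2]

theorem fiberWeight_le_fiberWeight (S : Finset ι) (c k : ℕ) {x y x' y' : ℝ} (hy' : 0 ≤ y')
    (hyy : y' ≤ y) (hyx : y ≤ x) (hxx : x ≤ x') (hs : x + y = x' + y') :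
    fiberWeight S c k x y ≤ fiberWeight S c k x' y' := by
  rcases S.eq_empty_or_nonempty with rfl | hS
  · simp [fiberWeight]
  rw [fiberWeight_eq hS, fiberWeight_eq hS, hs]
  have := pow_add_pow_le_pow_add_pow #S hy' hyy hyx hxx hs
  split_ifs <;> linarith

end FiberWeight

section Relabel

variable {N n : ℕ} {a b : Fin N} {ρ : Fin n → Fin N} {T : Finset (Fin n)}

def relabel (b a : Fin N) (ω : Fin n → Fin N) : Fin n → Fin N :=
  fun i => if ω i = b then a else ω i

theorem sum_fiber_relabel (hρ : ∀ i, ρ i ≠ b) (f : (Fin n → Fin N) → ℝ) :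
    ∑ ω with relabel b a ω = ρ, f ω =
      ∑ T ∈ ({i | ρ i = a} : Finset (Fin n)).powerset, f (T.piecewise (fun _ => b) ρ) := by
  symm
  apply sum_nbij' (fun T => T.piecewise (fun _ => b) ρ)
    (fun ω => ({i | ω i = b} : Finset (Fin n)))
  · intro T hT
    simp only [mem_powerset, subset_iff, mem_filter_univ] at hT
    simp only [mem_filter_univ]
    funext i
    by_cases hi : i ∈ T <;> simp [relabel, hi, hρ, hT]
  · intro ω hω
    simp only [mem_filter_univ] at hω
    simp only [mem_powerset, subset_iff, mem_filter_univ]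
    intro i hi
    simp [← hω, relabel, hi]
  · intro T _
    ext i
    by_cases hi : i ∈ T <;> simp [hi, hρ]
  · intro ω hω
    simp only [mem_filter_univ] at hω
    funext i
    by_cases hi : ω i = b <;> simp [← hω, relabel, hi]
  · intro T _
    rfl

theorem prod_comp_piecewise {q r : Fin N → ℝ} (hr : ∀ v, v ≠ a → v ≠ b → r v = q v)
    (hρ : ∀ i, ρ i ≠ b) (hT : T ⊆ ({i | ρ i = a} : Finset (Fin n))) :
    ∏ i, r (T.piecewise (fun _ => b) ρ i) =
      (∏ i with ρ i ≠ a, q (ρ i)) *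
        (r a ^ #(({i | ρ i = a} : Finset (Fin n)) \ T) * r b ^ #T) := by
  rw [← prod_filter_not_mul_prod_filter univ (fun i => ρ i = a), mul_comm (r a ^ _)]
  congr 1
  · refine prod_congr rfl fun i hi => ?_
    have hia : ρ i ≠ a := (mem_filter.1 hi).2
    have hiT : i ∉ T := fun h => hia (mem_filter.1 (hT h)).2
    rw [piecewise_eq_of_notMem _ _ _ hiT, hr _ hia (hρ i)]
  · rw [← prod_sdiff hT, mul_comm]
    congr 1
    · exact prod_eq_pow_card fun i hi => by rw [piecewise_eq_of_mem _ _ _ hi]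
    · refine prod_eq_pow_card fun i hi => ?_
      obtain ⟨hiS, hiT⟩ := mem_sdiff.1 hi
      rw [piecewise_eq_of_notMem _ _ _ hiT, (mem_filter.1 hiS).2]

theorem distinctCount_piecewise (hab : a ≠ b) (hρ : ∀ i, ρ i ≠ b)
    (hT : T ⊆ ({i | ρ i = a} : Finset (Fin n))) :
    distinctCount (T.piecewise (fun _ => b) ρ) = #(((univ.image ρ).erase a).erase b) +
      (if T = ({i | ρ i = a} : Finset (Fin n)) then 0 else 1) + if T = ∅ then 0 else 1 := by
  set ω := T.piecewise (fun _ => b) ρ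
  have hωρ : ∀ i ∉ T, ω i = ρ i := fun i hi => piecewise_eq_of_notMem _ _ _ hi
  have himg : ((univ.image ω).erase a).erase b = ((univ.image ρ).erase a).erase b := by
    ext v
    simp only [mem_erase, mem_image, mem_univ, true_and]
    constructor
    · rintro ⟨hvb, hva, i, rfl⟩
      have hi : i ∉ T := fun hi => hvb (piecewise_eq_of_mem _ _ _ hi)
      exact ⟨hvb, hva, i, (hωρ i hi).symm⟩
    · rintro ⟨hvb, hva, i, rfl⟩
      exact ⟨hvb, hva, i, hωρ i fun hi => hva (mem_filter.1 (hT hi)).2⟩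
  have ha : a ∈ univ.image ω ↔ T ≠ ({i | ρ i = a} : Finset (Fin n)) := by
    simp only [mem_image, mem_univ, true_and]
    constructor
    · rintro ⟨i, hi⟩ hTS
      by_cases hiT : i ∈ T
      · exact hab (hi.symm.trans (piecewise_eq_of_mem _ _ _ hiT))
      · exact hiT (hTS ▸ mem_filter.2 ⟨mem_univ i, (hωρ i hiT).symm.trans hi⟩)
    · intro hne
      obtain ⟨i, hiS, hiT⟩ := exists_of_ssubset (ssubset_of_subset_of_ne hT hne)
      exact ⟨i, (hωρ i hiT).trans (mem_filter.1 hiS).2⟩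
  have hb : b ∈ univ.image ω ↔ T ≠ ∅ := by
    simp only [mem_image, mem_univ, true_and]
    constructor
    · rintro ⟨i, hi⟩ hT0
      exact hρ i ((hωρ i (hT0 ▸ notMem_empty i)).symm.trans hi)
    · intro hne
      obtain ⟨i, hi⟩ := nonempty_iff_ne_empty.2 hne
      exact ⟨i, piecewise_eq_of_mem _ _ _ hi⟩
  rw [distinctCount, card_eq_card_erase_erase_add hab, himg]
  simp only [ha, hb, ite_not]

end Relabel

theorem prob_distinctCount_le_eq_sum {N n : ℕ} {a b : Fin N} {q r : Fin N → ℝ} (hab : a ≠ b)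
    (hr : ∀ v, v ≠ a → v ≠ b → r v = q v) (k : ℕ) :
    prob r {ω : Fin n → Fin N | distinctCount ω ≤ k} =
      ∑ ρ : Fin n → Fin N with ∀ i, ρ i ≠ b, (∏ i with ρ i ≠ a, q (ρ i)) *
        fiberWeight ({i | ρ i = a} : Finset (Fin n)) #(((univ.image ρ).erase a).erase b) k
          (r a) (r b) := by
  have hmaps : ∀ ω ∈ (univ : Finset (Fin n → Fin N)),
      relabel b a ω ∈ (univ.filter fun ρ : Fin n → Fin N => ∀ i, ρ i ≠ b) :=
    fun ω _ => (mem_filter_univ _).2 fun i => by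
      unfold relabel
      split_ifs with h
      exacts [hab, h]
  rw [prob, ← sum_fiberwise_of_maps_to hmaps]
  refine sum_congr rfl fun ρ hρ => ?_
  have hρ' := (mem_filter_univ ρ).1 hρ
  rw [sum_fiber_relabel hρ', fiberWeight, mul_sum]
  refine sum_congr rfl fun T hT => ?_
  have hT' := mem_powerset.1 hT
  simp only [Set.indicator_apply, Set.mem_ofPred_eq, distinctCount_piecewise hab hρ' hT',
    prod_comp_piecewise hr hρ' hT', mul_ite, mul_zero]

theorem transferAntitone_prob {N : ℕ} (n k : ℕ) :
    TransferAntitone fun r : Fin N → ℝ => prob r {ω : Fin n → Fin N | distinctCount ω ≤ k} := by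
  intro q hq a b ε hab hε hba
  have hr : ∀ v, v ≠ a → v ≠ b → transfer q a b ε v = q v := fun v hva hvb => by
    simp [transfer_apply, hva, hvb]
  beta_reduce
  rw [prob_distinctCount_le_eq_sum hab hr, prob_distinctCount_le_eq_sum hab fun _ _ _ => rfl]
  gcongr with ρ hρ
  · exact prod_nonneg fun i _ => hq _
  · have hta : transfer q a b ε a = q a - ε := by simp [transfer_apply, hab]
    have htb : transfer q a b ε b = q b + ε := by simp [transfer_apply, hab.symm]
    apply fiberWeight_le_fiberWeight <;> (try rw [hta, htb]) <;> linarith [hq b]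

theorem distinctCount_comp {N M n : ℕ} {e : Fin N → Fin M} (he : Function.Injective e)
    (ω : Fin n → Fin N) : distinctCount (e ∘ ω) = distinctCount ω := by
  rw [distinctCount, distinctCount, ← image_image, card_image_of_injective _ he]

theorem prob_distinctCount_le_comp {N : ℕ} (r : Fin N → ℝ) (σ : Equiv.Perm (Fin N)) (n k : ℕ) :
    prob (r ∘ σ) {ω : Fin n → Fin N | distinctCount ω ≤ k} =
      prob r {ω : Fin n → Fin N | distinctCount ω ≤ k} := by
  refine Fintype.sum_equiv ((Equiv.refl (Fin n)).arrowCongr σ) _ _ fun ω => ?_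
  simp [Set.indicator_apply, Equiv.arrowCongr, distinctCount_comp σ.injective]

theorem stmt_19_general (N : ℕ) (p q : Fin N → ℝ)
    (hpsum : ∑ i, p i = 1)
    (hq : ∀ i, 0 ≤ q i) (hqsum : ∑ i, q i = 1)
    (hmaj : Majorizes q p) (n k : ℕ) :
    prob p {ω : Fin n → Fin N | distinctCount ω ≤ k}
      ≤ prob q {ω : Fin n → Fin N | distinctCount ω ≤ k} :=
  (transferAntitone_prob n k).le_of_majorizes (fun r σ => prob_distinctCount_le_comp r σ n k) hq
    (hpsum.trans hqsum.symm) hmaj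

/-- Corollary 6.1 (Schur convexity): if `p ≺ q` then
`P_p(Y_n ≤ k) ≤ P_q(Y_n ≤ k)` for all `n ≥ 1`, `k ≥ 1`. -/
theorem stmt_19 (N : ℕ) (p q : Fin N → ℝ)
    (hp : ∀ i, 0 ≤ p i) (hpsum : ∑ i, p i = 1)
    (hq : ∀ i, 0 ≤ q i) (hqsum : ∑ i, q i = 1)
    (hmaj : Majorizes q p) (n k : ℕ) (hn : 1 ≤ n) (hk : 1 ≤ k) :
    prob p {ω : Fin n → Fin N | distinctCount ω ≤ k}
      ≤ prob q {ω : Fin n → Fin N | distinctCount ω ≤ k} :=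
  stmt_19_general N p q hpsum hq hqsum hmaj n k
end
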